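/- arXiv:2401.10552 — 3 statements merged into one kernel-verified Lean document; each statement's English description precedes it below -/
import Mathlib

section
/- Let −1 ≤ β < 1 and let b : [0,∞) → ℝ be a positive continuous function with b₁(1+t)^{−β} ≤ b(t) ≤ b₂(1+t)^{−β} for all t ≥ 0 and some b₁,b₂ > 0. Set B(t) := ∫₀^t b(s)ds, B₀ := ∫₀^∞ e^{−B(t)}dt, and g(t) := e^{B(t)}(B₀ − ∫₀^t e^{−B(τ)}dτ). Then there exists a constant C ≥ 1 such that C^{−1} b(t)^{−1} ≤ g(t) ≤ C b(t)^{−1} for all t ≥ 0. -/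
/-!
Put `I(t) = ∫_t^∞ e^{-B}`, so that `g = e^{B} I`. For any differentiable `ψ`, the function
`ψ e^{-B} - I` has derivative `(1 - (b ψ - ψ')) e^{-B}`. Hence a supersolution `ψ ≥ 0`
(`b ψ - ψ' ≥ 1` on `[T, ∞)`) satisfies `g ≤ ψ` on `[T, ∞)`, because `ψ e^{-B} - I` is antitone
and its limit is `≥ 0`. Likewise a subsolution `φ` (`b φ - φ' ≤ 1`) with `φ e^{-B} → 0` satisfies
`φ ≤ g`.

Both comparison functions are multiples of `(1 + t)^β`, which is comparable to `1 / b`.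
`(b₂ + |β|)⁻¹ (1 + t)^β` is a subsolution on all of `[0, ∞)`. `(2 / b₁) (1 + t)^β` is a
supersolution as soon as `β (1 + t)^{β - 1} ≤ b₁ / 2`. On the remaining compact interval,
`g ≤ e^{B(T)} I(0)` and `b` is bounded. Since
`B(t) ≥ B(0) + b₁ ((1 + t)^{1 - β} - 1) / (1 - β)`, the function `e^{-B}` decays faster than
every power of `1 + t`. This gives both its integrability and `φ e^{-B} → 0`.
-/

open MeasureTheory Real Set Filter Topology Asymptotics

/-- `∫_t^∞ E`, written as `∫_a^∞ E - ∫_a^t E` so that it is defined and differentiable for every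
`t`. -/
noncomputable def tailIntegral (E : ℝ → ℝ) (a t : ℝ) : ℝ :=
  (∫ τ in Ioi a, E τ) - ∫ τ in a..t, E τ

section TailIntegral

variable {E : ℝ → ℝ} {a : ℝ}

theorem hasDerivAt_tailIntegral (hE : Continuous E) (t : ℝ) :
    HasDerivAt (tailIntegral E a) (-E t) t :=
  (intervalIntegral.integral_hasDerivAt_right (hE.intervalIntegrable a t)
    hE.aestronglyMeasurable.stronglyMeasurableAtFilter hE.continuousAt).const_sub _

theorem tendsto_tailIntegral_atTop (hE : IntegrableOn E (Ioi a)) :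
    Tendsto (tailIntegral E a) atTop (𝓝 0) := by
  have h := (intervalIntegral_tendsto_integral_Ioi a hE tendsto_id).const_sub (∫ τ in Ioi a, E τ)
  rwa [sub_self] at h

theorem antitone_tailIntegral (hE : Continuous E) (hE₀ : ∀ x, 0 ≤ E x) :
    Antitone (tailIntegral E a) :=
  antitone_of_hasDerivAt_nonpos (hasDerivAt_tailIntegral hE) fun t => neg_nonpos.2 (hE₀ t)

theorem tailIntegral_nonneg (hE : Continuous E) (hE₀ : ∀ x, 0 ≤ E x)
    (hint : IntegrableOn E (Ioi a)) (t : ℝ) : 0 ≤ tailIntegral E a t :=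
  (antitone_tailIntegral hE hE₀).le_of_tendsto (tendsto_tailIntegral_atTop hint) t

theorem tailIntegral_congr {E' : ℝ → ℝ} (h : EqOn E E' (Ici a)) {t : ℝ} (ht : a ≤ t) :
    tailIntegral E a t = tailIntegral E' a t := by
  unfold tailIntegral
  rw [setIntegral_congr_fun measurableSet_Ioi fun τ hτ => h (le_of_lt hτ),
    intervalIntegral.integral_congr fun τ hτ => h (by rw [uIcc_of_le ht] at hτ; exact hτ.1)]

end TailIntegral

section Comparison

variable {b B ψ ψ' : ℝ → ℝ} {a T : ℝ}

theorem continuous_exp_neg_of_hasDerivAt (hB : ∀ t, HasDerivAt B (b t) t) :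
    Continuous fun t => exp (-B t) :=
  (continuous_iff_continuousAt.2 fun t => (hB t).continuousAt).neg.rexp

theorem hasDerivAt_mul_exp_neg_sub_tailIntegral (hB : ∀ t, HasDerivAt B (b t) t) {t : ℝ}
    (hψ : HasDerivAt ψ (ψ' t) t) :
    HasDerivAt (fun s => ψ s * exp (-B s) - tailIntegral (fun τ => exp (-B τ)) a s)
      ((1 - (b t * ψ t - ψ' t)) * exp (-B t)) t := by
  have hE := continuous_exp_neg_of_hasDerivAt hB
  refine ((hψ.mul (hB t).neg.exp).sub (hasDerivAt_tailIntegral (a := a) hE t)).congr_deriv ?_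
  simp only [Pi.neg_apply]
  ring

theorem exp_mul_tailIntegral_le_of_supersolution (hB : ∀ t, HasDerivAt B (b t) t)
    (hint : IntegrableOn (fun τ => exp (-B τ)) (Ioi a))
    (hψ : ∀ t, T ≤ t → HasDerivAt ψ (ψ' t) t) (hψ₀ : ∀ t, T ≤ t → 0 ≤ ψ t)
    (hsuper : ∀ t, T < t → 1 ≤ b t * ψ t - ψ' t) {t : ℝ} (ht : T ≤ t) :
    exp (B t) * tailIntegral (fun τ => exp (-B τ)) a t ≤ ψ t := by
  set I := tailIntegral (fun τ => exp (-B τ)) a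
  have hF := fun s (hs : T ≤ s) => hasDerivAt_mul_exp_neg_sub_tailIntegral (a := a) hB (hψ s hs)
  have hanti : AntitoneOn (fun s => ψ s * exp (-B s) - I s) (Ici T) := by
    refine antitoneOn_of_hasDerivWithinAt_nonpos (convex_Ici T)
      (fun s hs => (hF s hs).continuousAt.continuousWithinAt)
      (fun s hs => (hF s (interior_subset hs)).hasDerivWithinAt) fun s hs => ?_
    rw [interior_Ici] at hs
    exact mul_nonpos_of_nonpos_of_nonneg (by linarith [hsuper s hs]) (exp_pos _).le
  have hI : I t ≤ ψ t * exp (-B t) := by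
    have hlim : 0 ≤ ψ t * exp (-B t) - I t := by
      refine le_of_tendsto (by simpa using (tendsto_tailIntegral_atTop hint).neg) ?_
      filter_upwards [eventually_ge_atTop t] with s hs
      have hFs : ψ s * exp (-B s) - I s ≤ ψ t * exp (-B t) - I t := hanti ht (ht.trans hs) hs
      have hψs := mul_nonneg (hψ₀ s (ht.trans hs)) (exp_pos (-B s)).le
      linarith
    linarith
  calc exp (B t) * I t ≤ exp (B t) * (ψ t * exp (-B t)) := by gcongr
    _ = ψ t := by rw [exp_neg]; field_simp

theorem le_exp_mul_tailIntegral_of_subsolution (hB : ∀ t, HasDerivAt B (b t) t)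
    (hint : IntegrableOn (fun τ => exp (-B τ)) (Ioi a))
    (hψ : ∀ t, T ≤ t → HasDerivAt ψ (ψ' t) t)
    (hsub : ∀ t, T < t → b t * ψ t - ψ' t ≤ 1)
    (hdecay : Tendsto (fun t => ψ t * exp (-B t)) atTop (𝓝 0)) {t : ℝ} (ht : T ≤ t) :
    ψ t ≤ exp (B t) * tailIntegral (fun τ => exp (-B τ)) a t := by
  set I := tailIntegral (fun τ => exp (-B τ)) a
  have hF := fun s (hs : T ≤ s) => hasDerivAt_mul_exp_neg_sub_tailIntegral (a := a) hB (hψ s hs)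
  have hmono : MonotoneOn (fun s => ψ s * exp (-B s) - I s) (Ici T) := by
    refine monotoneOn_of_hasDerivWithinAt_nonneg (convex_Ici T)
      (fun s hs => (hF s hs).continuousAt.continuousWithinAt)
      (fun s hs => (hF s (interior_subset hs)).hasDerivWithinAt) fun s hs => ?_
    rw [interior_Ici] at hs
    exact mul_nonneg (by linarith [hsub s hs]) (exp_pos _).le
  have hI : ψ t * exp (-B t) ≤ I t := by
    have hlim : ψ t * exp (-B t) - I t ≤ 0 := by
      refine ge_of_tendsto (by simpa using hdecay.sub (tendsto_tailIntegral_atTop hint)) ?_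
      filter_upwards [eventually_ge_atTop t] with s hs
      exact hmono ht (ht.trans hs) hs
    linarith
  calc ψ t = exp (B t) * (ψ t * exp (-B t)) := by rw [exp_neg]; field_simp
    _ ≤ exp (B t) * I t := by gcongr

theorem exp_mul_tailIntegral_le_of_le {t : ℝ} (hB : ∀ t, HasDerivAt B (b t) t)
    (hb : ∀ t, a < t → 0 ≤ b t) (hint : IntegrableOn (fun τ => exp (-B τ)) (Ioi a))
    (ht : a ≤ t) (htT : t ≤ T) :
    exp (B t) * tailIntegral (fun τ => exp (-B τ)) a t ≤
      exp (B T) * tailIntegral (fun τ => exp (-B τ)) a a := by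
  have hE := continuous_exp_neg_of_hasDerivAt hB
  have hmono : MonotoneOn B (Ici a) := monotoneOn_of_hasDerivWithinAt_nonneg (convex_Ici a)
    (fun s _ => (hB s).continuousAt.continuousWithinAt) (fun s _ => (hB s).hasDerivWithinAt)
    (fun s hs => hb s (by rwa [interior_Ici] at hs))
  have hE₀ : ∀ x, 0 ≤ exp (-B x) := fun x => (exp_pos _).le
  gcongr
  · exact tailIntegral_nonneg hE hE₀ hint t
  · exact hmono ht (ht.trans htT) htT
  · exact antitone_tailIntegral hE hE₀ ht

end Comparison

theorem hasDerivAt_one_add_rpow (r : ℝ) {t : ℝ} (ht : -1 < t) :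
    HasDerivAt (fun s => (1 + s) ^ r) (r * (1 + t) ^ (r - 1)) t := by
  simpa using ((hasDerivAt_id t).const_add 1).rpow_const (p := r) (Or.inl (by dsimp; linarith))

theorem isLittleO_exp_neg_mul_one_add_rpow (p : ℝ) {c q : ℝ} (hc : 0 < c) (hq : 0 < q) :
    (fun t => exp (-c * (1 + t) ^ q)) =o[atTop] fun t => (1 + t) ^ p := by
  have hu : Tendsto (fun t : ℝ => (1 + t) ^ q) atTop atTop :=
    (tendsto_rpow_atTop hq).comp (tendsto_atTop_add_const_left _ 1 tendsto_id)
  refine ((isLittleO_exp_neg_mul_rpow_atTop hc (p / q)).comp_tendsto hu).congr' EventuallyEq.rfl ?_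
  filter_upwards [eventually_ge_atTop 0] with t ht
  rw [Function.comp_apply, ← rpow_mul (by linarith), mul_div_cancel₀ _ hq.ne']

section PowerLaw

variable {β b₁ b₂ : ℝ} {b B : ℝ → ℝ}

theorem le_mul_rpow_of_mul_rpow_neg_le {x c y : ℝ} (hx : 0 < x) (h : c * x ^ (-β) ≤ y) :
    c ≤ y * x ^ β := by
  rwa [rpow_neg hx.le, ← div_eq_mul_inv, div_le_iff₀ (rpow_pos_of_pos hx β)] at h

theorem mul_rpow_le_of_le_mul_rpow_neg {x c y : ℝ} (hx : 0 < x) (h : y ≤ c * x ^ (-β)) :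
    y * x ^ β ≤ c := by
  rwa [rpow_neg hx.le, ← div_eq_mul_inv, le_div_iff₀ (rpow_pos_of_pos hx β)] at h

theorem add_mul_one_add_rpow_sub_one_le (hB : ∀ t, HasDerivAt B (b t) t) (hβ : β < 1)
    (hlow : ∀ t, 0 ≤ t → b₁ * (1 + t) ^ (-β) ≤ b t) {t : ℝ} (ht : 0 ≤ t) :
    B 0 + b₁ / (1 - β) * ((1 + t) ^ (1 - β) - 1) ≤ B t := by
  have hP : ∀ s, 0 ≤ s → HasDerivAt (fun s => B s - b₁ / (1 - β) * (1 + s) ^ (1 - β))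
      (b s - b₁ * (1 + s) ^ (-β)) s := fun s hs => by
    refine ((hB s).sub ((hasDerivAt_one_add_rpow (1 - β) (by linarith)).const_mul _)).congr_deriv ?_
    field_simp [(sub_pos.2 hβ).ne']
    ring_nf
  have hmono := monotoneOn_of_hasDerivWithinAt_nonneg (convex_Ici 0)
    (fun s hs => (hP s hs).continuousAt.continuousWithinAt)
    (fun s hs => (hP s (interior_subset hs)).hasDerivWithinAt)
    (fun s hs => by rw [interior_Ici] at hs; linarith [hlow s hs.le])
    (le_refl (0 : ℝ)) ht ht
  simp only [add_zero, one_rpow] at hmono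
  linarith

theorem isLittleO_exp_neg_primitive (hB : ∀ t, HasDerivAt B (b t) t) (hβ : β < 1)
    (hb₁ : 0 < b₁) (hlow : ∀ t, 0 ≤ t → b₁ * (1 + t) ^ (-β) ≤ b t) (p : ℝ) :
    (fun t => exp (-B t)) =o[atTop] fun t => (1 + t) ^ p := by
  set c := b₁ / (1 - β)
  refine IsBigO.trans_isLittleO ?_
    (isLittleO_exp_neg_mul_one_add_rpow p (div_pos hb₁ (sub_pos.2 hβ)) (sub_pos.2 hβ))
  refine IsBigO.of_bound (exp (c - B 0)) ?_
  filter_upwards [eventually_ge_atTop 0] with t ht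
  have := add_mul_one_add_rpow_sub_one_le hB hβ hlow ht
  rw [norm_of_nonneg (exp_pos _).le, norm_of_nonneg (exp_pos _).le, ← exp_add, neg_mul]
  gcongr
  linarith

theorem integrableOn_exp_neg_primitive (hB : ∀ t, HasDerivAt B (b t) t) (hβ : β < 1)
    (hb₁ : 0 < b₁) (hlow : ∀ t, 0 ≤ t → b₁ * (1 + t) ^ (-β) ≤ b t) :
    IntegrableOn (fun t => exp (-B t)) (Ioi 0) := by
  have hE := continuous_exp_neg_of_hasDerivAt hB
  have hpow : (fun t : ℝ => (1 + t) ^ (-2 : ℝ)) =O[atTop] fun t => t ^ (-2 : ℝ) := by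
    refine IsBigO.of_bound 1 ?_
    filter_upwards [eventually_gt_atTop 0] with t ht
    rw [one_mul, norm_of_nonneg (by positivity), norm_of_nonneg (by positivity)]
    exact rpow_le_rpow_of_nonpos ht (by linarith) (by norm_num)
  refine (LocallyIntegrableOn.integrableOn_of_isBigO_atTop (a := 0)
    (hE.locallyIntegrable.locallyIntegrableOn _)
    ((isLittleO_exp_neg_primitive hB hβ hb₁ hlow (-2)).isBigO.trans hpow)
    (integrableAtFilter_rpow_atTop_iff.2 (by norm_num))).mono_set Ioi_subset_Ici_self

theorem div_add_abs_mul_inv_le_exp_mul_tailIntegral (hB : ∀ t, HasDerivAt B (b t) t)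
    (hβ : β < 1) (hb₁ : 0 < b₁) (hb₂ : 0 < b₂)
    (hlow : ∀ t, 0 ≤ t → b₁ * (1 + t) ^ (-β) ≤ b t)
    (hupp : ∀ t, 0 ≤ t → b t ≤ b₂ * (1 + t) ^ (-β)) {t : ℝ} (ht : 0 ≤ t) :
    b₁ / (b₂ + |β|) * (b t)⁻¹ ≤ exp (B t) * tailIntegral (fun τ => exp (-B τ)) 0 t := by
  set k := (b₂ + |β|)⁻¹
  have hφ : ∀ s, 0 ≤ s → HasDerivAt (fun s => k * (1 + s) ^ β) (k * (β * (1 + s) ^ (β - 1))) s :=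
    fun s hs => (hasDerivAt_one_add_rpow β (by linarith)).const_mul k
  have hsub : ∀ s, 0 < s → b s * (k * (1 + s) ^ β) - k * (β * (1 + s) ^ (β - 1)) ≤ 1 := by
    intro s hs
    have hb : b s * (1 + s) ^ β ≤ b₂ := mul_rpow_le_of_le_mul_rpow_neg (by linarith) (hupp s hs.le)
    have hpow : (1 + s) ^ (β - 1) ≤ 1 :=
      rpow_le_one_of_one_le_of_nonpos (by linarith) (by linarith)
    have hdrift : -(β * (1 + s) ^ (β - 1)) ≤ |β| := by
      nlinarith [neg_abs_le β, abs_nonneg β, rpow_nonneg (by linarith : (0 : ℝ) ≤ 1 + s) (β - 1)]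
    calc _ = k * (b s * (1 + s) ^ β - β * (1 + s) ^ (β - 1)) := by ring
      _ ≤ k * (b₂ + |β|) := by gcongr; linarith
      _ = 1 := inv_mul_cancel₀ (by positivity)
  have hdecay : Tendsto (fun s => k * (1 + s) ^ β * exp (-B s)) atTop (𝓝 0) := by
    have h := (isLittleO_exp_neg_primitive hB hβ hb₁ hlow (-β)).tendsto_div_nhds_zero.const_mul k
    rw [mul_zero] at h
    refine h.congr' ?_
    filter_upwards [eventually_ge_atTop 0] with s hs
    rw [rpow_neg (by linarith), div_inv_eq_mul]
    ring
  refine le_trans ?_ (le_exp_mul_tailIntegral_of_subsolution hB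
    (integrableOn_exp_neg_primitive hB hβ hb₁ hlow) hφ hsub hdecay ht)
  have hbt : 0 < b t := lt_of_lt_of_le (by positivity) (hlow t ht)
  have h := le_mul_rpow_of_mul_rpow_neg_le (by linarith) (hlow t ht)
  rw [div_eq_inv_mul, mul_assoc]
  gcongr
  rwa [mul_inv_le_iff₀ hbt, mul_comm]

theorem exists_exp_mul_tailIntegral_le_rpow (hB : ∀ t, HasDerivAt B (b t) t) (hβ : β < 1)
    (hb₁ : 0 < b₁) (hlow : ∀ t, 0 ≤ t → b₁ * (1 + t) ^ (-β) ≤ b t) :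
    ∃ T, 0 ≤ T ∧ ∀ t, T ≤ t →
      exp (B t) * tailIntegral (fun τ => exp (-B τ)) 0 t ≤ 2 / b₁ * (1 + t) ^ β := by
  obtain ⟨T, hT⟩ : ∃ T, ∀ s, T ≤ s → β * (1 + s) ^ (β - 1) ≤ b₁ / 2 := by
    have h := ((tendsto_rpow_neg_atTop (sub_pos.2 hβ)).comp
      (tendsto_atTop_add_const_left _ 1 tendsto_id)).const_mul β
    rw [mul_zero] at h
    simp only [Function.comp_apply, id, neg_sub] at h
    exact eventually_atTop.1 (h.eventually (ge_mem_nhds (by positivity)))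
  refine ⟨max T 0, le_max_right _ _, fun t ht => ?_⟩
  refine exp_mul_tailIntegral_le_of_supersolution hB
    (integrableOn_exp_neg_primitive hB hβ hb₁ hlow)
    (fun s hs => (hasDerivAt_one_add_rpow β (by linarith [le_max_right T 0])).const_mul (2 / b₁))
    (fun s hs => by have : 0 ≤ s := (le_max_right _ _).trans hs; positivity) (fun s hsT => ?_) ht
  have hs : 0 ≤ s := (le_max_right _ _).trans hsT.le
  have hb : b₁ ≤ b s * (1 + s) ^ β := le_mul_rpow_of_mul_rpow_neg_le (by linarith) (hlow s hs)
  have hdrift := hT s ((le_max_left _ _).trans hsT.le)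
  calc (1 : ℝ) = 2 / b₁ * (b₁ - b₁ / 2) := by field_simp; ring
    _ ≤ 2 / b₁ * (b s * (1 + s) ^ β - β * (1 + s) ^ (β - 1)) := by gcongr
    _ = _ := by ring

theorem exists_exp_mul_tailIntegral_le_mul_inv (hB : ∀ t, HasDerivAt B (b t) t) (hβ : β < 1)
    (hb₁ : 0 < b₁) (hb₂ : 0 < b₂) (hlow : ∀ t, 0 ≤ t → b₁ * (1 + t) ^ (-β) ≤ b t)
    (hupp : ∀ t, 0 ≤ t → b t ≤ b₂ * (1 + t) ^ (-β)) :
    ∃ C, ∀ t, 0 ≤ t → exp (B t) * tailIntegral (fun τ => exp (-B τ)) 0 t ≤ C * (b t)⁻¹ := by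
  obtain ⟨T, hT, hfar⟩ := exists_exp_mul_tailIntegral_le_rpow hB hβ hb₁ hlow
  have hint := integrableOn_exp_neg_primitive hB hβ hb₁ hlow
  set M := exp (B T) * tailIntegral (fun τ => exp (-B τ)) 0 0
  have hM : 0 ≤ M := mul_nonneg (exp_pos _).le
    (tailIntegral_nonneg (continuous_exp_neg_of_hasDerivAt hB) (fun _ => (exp_pos _).le) hint 0)
  refine ⟨max (2 / b₁ * b₂) (M * (b₂ * (1 + T) ^ |β|)), fun t ht => ?_⟩
  have hbt : 0 < b t := lt_of_lt_of_le (by positivity) (hlow t ht)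
  rcases le_total T t with hTt | htT
  · have hb := mul_rpow_le_of_le_mul_rpow_neg (by linarith) (hupp t ht)
    calc _ ≤ 2 / b₁ * (1 + t) ^ β := hfar t hTt
      _ ≤ 2 / b₁ * b₂ * (b t)⁻¹ := by
          rw [mul_assoc]; gcongr; rwa [le_mul_inv_iff₀ hbt, mul_comm]
      _ ≤ _ := by gcongr; exact le_max_left _ _
  · have hnear := exp_mul_tailIntegral_le_of_le hB
      (fun s hs => (lt_of_lt_of_le (by positivity) (hlow s hs.le)).le)
      hint ht htT
    have hbT : b t ≤ b₂ * (1 + T) ^ |β| := by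
      calc b t ≤ b₂ * (1 + t) ^ (-β) := hupp t ht
        _ ≤ b₂ * (1 + t) ^ |β| := by
            gcongr
            · linarith
            · exact neg_le_abs β
        _ ≤ b₂ * (1 + T) ^ |β| := by gcongr
    calc _ ≤ M := hnear
      _ ≤ M * (b₂ * (1 + T) ^ |β|) * (b t)⁻¹ := by
          rw [mul_assoc]
          exact le_mul_of_one_le_right hM (by rwa [le_mul_inv_iff₀ hbt, one_mul])
      _ ≤ _ := by gcongr; exact le_max_right _ _

end PowerLaw

theorem hasDerivAt_integral_comp_max {b : ℝ → ℝ} (hb : ContinuousOn b (Ici 0)) (t : ℝ) :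
    HasDerivAt (fun t => ∫ s in (0 : ℝ)..t, b (max s 0)) (b (max t 0)) t := by
  have hc : Continuous fun s => b (max s 0) :=
    hb.comp_continuous (continuous_id.max continuous_const) fun s => le_max_right s 0
  exact intervalIntegral.integral_hasDerivAt_right (hc.intervalIntegrable 0 t)
    hc.aestronglyMeasurable.stronglyMeasurableAtFilter hc.continuousAt

theorem integral_comp_max_eq {b : ℝ → ℝ} {t : ℝ} (ht : 0 ≤ t) :
    ∫ s in (0 : ℝ)..t, b (max s 0) = ∫ s in (0 : ℝ)..t, b s :=
  intervalIntegral.integral_congr fun s hs => by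
    rw [uIcc_of_le ht] at hs
    rw [max_eq_left hs.1]

theorem exists_one_le_inv_mul_le_and_le_mul {ι : Type*} {p : ι → Prop} {u v : ι → ℝ} {c C : ℝ}
    (hc : 0 < c) (hu : ∀ i, p i → 0 ≤ u i) (hlo : ∀ i, p i → c * u i ≤ v i)
    (hup : ∀ i, p i → v i ≤ C * u i) :
    ∃ C', 1 ≤ C' ∧ ∀ i, p i → C'⁻¹ * u i ≤ v i ∧ v i ≤ C' * u i := by
  refine ⟨max 1 (max c⁻¹ C), le_max_left _ _, fun i hi => ?_⟩
  have hui := hu i hi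
  refine ⟨(hlo i hi).trans' ?_, (hup i hi).trans ?_⟩
  · gcongr
    exact inv_le_of_inv_le₀ hc (le_max_of_le_right (le_max_left _ _))
  · gcongr
    exact le_max_of_le_right (le_max_right _ _)

theorem aux_g_comparable_binv_general (β : ℝ) (hβ2 : β < 1)
    (b : ℝ → ℝ) (hb_cont : ContinuousOn b (Ici 0))
    (b₁ b₂ : ℝ) (hb₁ : 0 < b₁) (hb₂ : 0 < b₂)
    (hlow : ∀ t, 0 ≤ t → b₁ * (1 + t) ^ (-β) ≤ b t)
    (hupp : ∀ t, 0 ≤ t → b t ≤ b₂ * (1 + t) ^ (-β))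
    (B : ℝ → ℝ) (hB : ∀ t, B t = ∫ s in (0:ℝ)..t, b s)
    (B₀ : ℝ) (hB₀ : B₀ = ∫ t in Ioi (0:ℝ), Real.exp (-B t))
    (g : ℝ → ℝ) (hg : ∀ t, g t = Real.exp (B t) * (B₀ - ∫ τ in (0:ℝ)..t, Real.exp (-B τ))) :
    ∃ C : ℝ, 1 ≤ C ∧ ∀ t, 0 ≤ t →
      C⁻¹ * (b t)⁻¹ ≤ g t ∧ g t ≤ C * (b t)⁻¹ := by
  -- `b (max t 0)` extends `b` continuously to `ℝ`, so its primitive is differentiable everywhere.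
  set B' : ℝ → ℝ := fun t => ∫ s in (0 : ℝ)..t, b (max s 0)
  have hB' : ∀ t, HasDerivAt B' (b (max t 0)) t := hasDerivAt_integral_comp_max hb_cont
  have hb : ∀ t, 0 ≤ t → b (max t 0) = b t := fun t ht => by rw [max_eq_left ht]
  have hlow' : ∀ t, 0 ≤ t → b₁ * (1 + t) ^ (-β) ≤ b (max t 0) := fun t ht => hb t ht ▸ hlow t ht
  have hupp' : ∀ t, 0 ≤ t → b (max t 0) ≤ b₂ * (1 + t) ^ (-β) := fun t ht => hb t ht ▸ hupp t ht
  have hBB' : ∀ t, 0 ≤ t → B t = B' t := fun t ht =>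
    (hB t).trans (integral_comp_max_eq ht).symm
  have hg' : ∀ t, 0 ≤ t → g t = exp (B' t) * tailIntegral (fun τ => exp (-B' τ)) 0 t :=
    fun t ht => by
      rw [hg, hB₀, hBB' t ht]
      exact congrArg _ (tailIntegral_congr (fun τ hτ => by rw [hBB' τ hτ]) ht)
  obtain ⟨C, hC⟩ := exists_exp_mul_tailIntegral_le_mul_inv hB' hβ2 hb₁ hb₂ hlow' hupp'
  refine exists_one_le_inv_mul_le_and_le_mul (c := b₁ / (b₂ + |β|)) (C := C) (by positivity)
    (fun t ht => (inv_pos.2 ((mul_pos hb₁ (by positivity)).trans_le (hlow t ht))).le)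
    (fun t ht => ?_) (fun t ht => ?_)
  · rw [hg' t ht, ← hb t ht]
    exact div_add_abs_mul_inv_le_exp_mul_tailIntegral hB' hβ2 hb₁ hb₂ hlow' hupp' ht
  · rw [hg' t ht, ← hb t ht]
    exact hC t ht

/-- Let `−1 ≤ β < 1` and let `b` be positive continuous with
`b₁(1+t)^{−β} ≤ b(t) ≤ b₂(1+t)^{−β}`.  With `B(t) = ∫₀^t b`, `B₀ = ∫₀^∞ e^{−B}` and
`g(t) = e^{B(t)}(B₀ − ∫₀^t e^{−B})`, there is `C ≥ 1` with
`C⁻¹ b(t)⁻¹ ≤ g(t) ≤ C b(t)⁻¹` for all `t ≥ 0`. -/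
theorem aux_g_comparable_binv (β : ℝ) (hβ1 : -1 ≤ β) (hβ2 : β < 1)
    (b : ℝ → ℝ) (hb_cont : ContinuousOn b (Ici 0)) (hb_pos : ∀ t, 0 ≤ t → 0 < b t)
    (b₁ b₂ : ℝ) (hb₁ : 0 < b₁) (hb₂ : 0 < b₂)
    (hlow : ∀ t, 0 ≤ t → b₁ * (1 + t) ^ (-β) ≤ b t)
    (hupp : ∀ t, 0 ≤ t → b t ≤ b₂ * (1 + t) ^ (-β))
    (B : ℝ → ℝ) (hB : ∀ t, B t = ∫ s in (0:ℝ)..t, b s)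
    (B₀ : ℝ) (hB₀ : B₀ = ∫ t in Ioi (0:ℝ), Real.exp (-B t))
    (g : ℝ → ℝ) (hg : ∀ t, g t = Real.exp (B t) * (B₀ - ∫ τ in (0:ℝ)..t, Real.exp (-B τ))) :
    ∃ C : ℝ, 1 ≤ C ∧ ∀ t, 0 ≤ t →
      C⁻¹ * (b t)⁻¹ ≤ g t ∧ g t ≤ C * (b t)⁻¹ :=
  aux_g_comparable_binv_general β hβ2 b hb_cont b₁ b₂ hb₁ hb₂ hlow hupp B hB B₀ hB₀ g hg
end

section
/- Let −1 ≤ β < 1 and let b : [0,∞) → ℝ be a positive C¹ function with b₁(1+t)^{−β} ≤ b(t) ≤ b₂(1+t)^{−β} and |b'(t)| ≤ b₃(1+t)^{−1}b(t) for all t ≥ 0 and some b₁,b₂,b₃ > 0. Set B(t) := ∫₀^t b(s)ds, B₀ := ∫₀^∞ e^{−B(t)}dt, and g(t) := e^{B(t)}(B₀ − ∫₀^t e^{−B(τ)}dτ). Then lim_{t→∞} b(t)g(t) = 1. -/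
set_option autoImplicit false

open MeasureTheory Real Set Filter Topology

/-!
Write `E = exp (-B)`, so that `g t = exp (B t) * ∫_t^∞ E` once `∫_0^∞ E` is split at `t`.
Since `(E / b)' = -E (1 + b' / b²)`, integrating over `(t, ∞)` gives
`E t / b t = ∫_t^∞ E (1 + b' / b²)`, and the bounds on `b` and `b'` give
`|b'| / b² ≤ (b₃ / b₁) (1 + t)^(β - 1) → 0` there. Hence `E t / b t = (1 + o(1)) ∫_t^∞ E`,
which is `b t * g t → 1`. The improper integrals make sense because
`B t ≥ b₁ ((1 + t)^(1 - β) - 1) / (1 - β)`, so `E` decays faster than any power of `t`.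
-/

theorem continuousOn_primitive_Ici {f : ℝ → ℝ} {a : ℝ} (hf : ContinuousOn f (Ici a)) :
    ContinuousOn (fun x => ∫ s in a..x, f s) (Ici a) := by
  intro x hx
  have hx : a ≤ x := hx
  have hIcc : uIcc a (x + 1) = Icc a (x + 1) := uIcc_of_le (by linarith)
  have hcont := intervalIntegral.continuousOn_primitive_interval
    ((hf.mono (hIcc ▸ Icc_subset_Ici_self)).integrableOn_compact (μ := volume) isCompact_uIcc)
  rw [hIcc] at hcont
  refine (hcont x ⟨hx, by linarith⟩).mono_of_mem_nhdsWithin ?_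
  rw [← Ici_inter_Iic]
  exact inter_mem_nhdsWithin _ (Iic_mem_nhds (by linarith))

theorem hasDerivAt_primitive_of_continuousOn_Ici {f : ℝ → ℝ} {a x : ℝ}
    (hf : ContinuousOn f (Ici a)) (hx : a < x) :
    HasDerivAt (fun u => ∫ s in a..u, f s) (f x) x :=
  intervalIntegral.integral_hasDerivAt_right
    ((hf.mono (by rw [uIcc_of_le hx.le]; exact Icc_subset_Ici_self)).intervalIntegrable)
    ((hf.mono Ioi_subset_Ici_self).stronglyMeasurableAtFilter isOpen_Ioi x hx)
    (hf.continuousAt (Ici_mem_nhds hx))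

theorem integral_one_add_rpow {r : ℝ} (hr : -1 < r) (t : ℝ) :
    ∫ s in (0 : ℝ)..t, (1 + s) ^ r = ((1 + t) ^ (r + 1) - 1) / (r + 1) := by
  rw [intervalIntegral.integral_comp_add_left (fun x => x ^ r), add_zero, integral_rpow (Or.inl hr),
    one_rpow]

theorem le_integral_of_mul_one_add_rpow_le {f : ℝ → ℝ} {c β t : ℝ} (hβ : β < 1) (ht : 0 ≤ t)
    (hf : IntervalIntegrable f volume 0 t) (hlow : ∀ s ∈ Icc 0 t, c * (1 + s) ^ (-β) ≤ f s) :
    c / (1 - β) * (1 + t) ^ (1 - β) - c / (1 - β) ≤ ∫ s in (0 : ℝ)..t, f s := by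
  have hint : IntervalIntegrable (fun s => c * (1 + s) ^ (-β)) volume 0 t := by
    refine ContinuousOn.intervalIntegrable (continuousOn_const.mul
      ((continuousOn_const.add continuousOn_id).rpow_const fun s hs => Or.inl ?_))
    rw [uIcc_of_le ht] at hs
    show 1 + s ≠ 0
    linarith [hs.1]
  have hmono := intervalIntegral.integral_mono_on ht hint hf hlow
  rw [intervalIntegral.integral_const_mul, integral_one_add_rpow (by linarith),
    show -β + 1 = 1 - β by ring] at hmono
  calc _ = c * (((1 + t) ^ (1 - β) - 1) / (1 - β)) := by ring
    _ ≤ _ := hmono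

theorem tendsto_rpow_mul_exp_neg_mul_rpow_atTop_nhds_zero (p : ℝ) {c γ : ℝ} (hc : 0 < c)
    (hγ : 0 < γ) : Tendsto (fun x : ℝ => x ^ p * exp (-(c * x ^ γ))) atTop (𝓝 0) := by
  refine ((tendsto_rpow_mul_exp_neg_mul_atTop_nhds_zero (p / γ) c hc).comp
    (tendsto_rpow_atTop hγ)).congr' ?_
  filter_upwards [eventually_ge_atTop 0] with x hx
  rw [Function.comp_apply, ← rpow_mul hx, mul_div_cancel₀ p hγ.ne', neg_mul]

theorem tendsto_one_add_rpow_mul_exp_neg_of_le {B : ℝ → ℝ} {c d γ : ℝ} (hc : 0 < c)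
    (hγ : 0 < γ) (hB : ∀ᶠ x in atTop, c * (1 + x) ^ γ - d ≤ B x) (p : ℝ) :
    Tendsto (fun x => (1 + x) ^ p * exp (-B x)) atTop (𝓝 0) := by
  have hlim := ((tendsto_rpow_mul_exp_neg_mul_rpow_atTop_nhds_zero p hc hγ).comp
    (tendsto_atTop_add_const_left atTop 1 tendsto_id)).const_mul (exp d)
  rw [mul_zero] at hlim
  refine squeeze_zero' ?_ ?_ hlim
  · filter_upwards [eventually_ge_atTop 0] with x hx
    exact mul_nonneg (rpow_nonneg (by linarith) p) (exp_pos _).le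
  · filter_upwards [hB, eventually_ge_atTop 0] with x hBx hx
    calc (1 + x) ^ p * exp (-B x) ≤ (1 + x) ^ p * exp (d - c * (1 + x) ^ γ) := by
          gcongr; linarith
      _ = exp d * ((1 + x) ^ p * exp (-(c * (1 + x) ^ γ))) := by
          rw [sub_eq_add_neg, exp_add]; ring

theorem integrableOn_Ioi_of_tendsto_one_add_rpow_mul {f : ℝ → ℝ} {a p : ℝ} (hp : 1 < p)
    (hf : ContinuousOn f (Ici a)) (hlim : Tendsto (fun x => (1 + x) ^ p * f x) atTop (𝓝 0)) :
    IntegrableOn f (Ioi a) := by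
  have hO : f =O[atTop] fun x => x ^ (-p) := by
    refine Asymptotics.IsBigO.of_bound 1 ?_
    filter_upwards [hlim.abs.eventually_lt_const (by norm_num : |(0 : ℝ)| < 1),
      eventually_gt_atTop 0] with x hx hx0
    rw [abs_mul, abs_of_pos (rpow_pos_of_pos (by linarith) p)] at hx
    rw [norm_eq_abs, norm_eq_abs, one_mul, abs_of_pos (rpow_pos_of_pos hx0 _), rpow_neg hx0.le,
      ← one_div]
    calc |f x| ≤ 1 / (1 + x) ^ p := (le_div_iff₀' (rpow_pos_of_pos (by linarith) p)).mpr hx.le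
      _ ≤ 1 / x ^ p := by gcongr; linarith
  exact ((hf.locallyIntegrableOn measurableSet_Ici).integrableOn_of_isBigO_atTop hO
    (integrableAtFilter_rpow_atTop_iff.mpr (by linarith))).mono_set Ioi_subset_Ici_self

theorem tendsto_div_of_mul_one_add_rpow_le {f b : ℝ → ℝ} {c β : ℝ} (hc : 0 < c)
    (hf : ∀ᶠ x in atTop, 0 ≤ f x) (hb : ∀ᶠ x in atTop, c * (1 + x) ^ (-β) ≤ b x)
    (hlim : Tendsto (fun x => (1 + x) ^ β * f x) atTop (𝓝 0)) :
    Tendsto (fun x => f x / b x) atTop (𝓝 0) := by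
  refine squeeze_zero' ?_ ?_ (by simpa using hlim.div_const c)
  · filter_upwards [hf, hb, eventually_ge_atTop 0] with x hfx hbx hx
    exact div_nonneg hfx (le_trans (by positivity) hbx)
  · filter_upwards [hf, hb, eventually_ge_atTop 0] with x hfx hbx hx
    have hpos : 0 < c * (1 + x) ^ (-β) := by positivity
    rw [div_le_div_iff₀ (hpos.trans_le hbx) hc]
    calc f x * c = (1 + x) ^ β * f x * (c * (1 + x) ^ (-β)) := by
          rw [rpow_neg (by linarith)]; field_simp
      _ ≤ (1 + x) ^ β * f x * b x := by gcongr

theorem abs_div_sq_le_of_le_mul_rpow {x y y' t β b₁ b₃ : ℝ} (ht : 0 ≤ t) (htx : t ≤ x)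
    (hβ : β ≤ 1) (hb₁ : 0 < b₁) (hy : b₁ * (1 + x) ^ (-β) ≤ y)
    (hy' : |y'| ≤ b₃ * (1 + x)⁻¹ * y) :
    |y'| / y ^ 2 ≤ b₃ / b₁ * (1 + t) ^ (β - 1) := by
  have hx : 0 < 1 + x := by linarith
  have hy0 : 0 < y := lt_of_lt_of_le (by positivity) hy
  have hb₃ : 0 ≤ b₃ := nonneg_of_mul_nonneg_left
    ((abs_nonneg _).trans (hy'.trans_eq (by ring))) (by positivity : 0 < (1 + x)⁻¹ * y)
  calc |y'| / y ^ 2 ≤ b₃ * (1 + x)⁻¹ * y / y ^ 2 := by gcongr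
    _ = b₃ * (1 + x)⁻¹ / y := by field_simp
    _ ≤ b₃ * (1 + x)⁻¹ / (b₁ * (1 + x) ^ (-β)) := by gcongr
    _ = b₃ / b₁ * (1 + x) ^ (β - 1) := by
        rw [rpow_neg hx.le, rpow_sub hx, rpow_one]
        field_simp
    _ ≤ b₃ / b₁ * (1 + t) ^ (β - 1) := by
        gcongr b₃ / b₁ * ?_
        exact rpow_le_rpow_of_nonpos (by linarith) (by linarith) (by linarith)

theorem hasDerivAt_exp_neg_div {B b : ℝ → ℝ} {x b' : ℝ} (hB : HasDerivAt B (b x) x)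
    (hb : HasDerivAt b b' x) (hbx : b x ≠ 0) :
    HasDerivAt (fun y => exp (-B y) / b y) (-exp (-B x) - exp (-B x) * (b' / b x ^ 2)) x := by
  refine (hB.fun_neg.exp.fun_div hb hbx).congr_deriv ?_
  field_simp

theorem abs_sub_integral_Ioi_le_of_hasDerivAt {F F' E : ℝ → ℝ} {a ε : ℝ}
    (hcont : ContinuousWithinAt F (Ici a) a) (hderiv : ∀ x ∈ Ioi a, HasDerivAt F (F' x) x)
    (hE : IntegrableOn E (Ioi a)) (hclose : ∀ x ∈ Ioi a, |F' x + E x| ≤ ε * E x)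
    (hF : Tendsto F atTop (𝓝 0)) :
    |F a - ∫ x in Ioi a, E x| ≤ ε * ∫ x in Ioi a, E x := by
  have hmeas : AEStronglyMeasurable F' (volume.restrict (Ioi a)) :=
    (aestronglyMeasurable_deriv F _).congr <|
      (ae_restrict_mem measurableSet_Ioi).mono fun x hx => (hderiv x hx).deriv
  have hsum : IntegrableOn (fun x => F' x + E x) (Ioi a) :=
    Integrable.mono' (hE.const_mul ε) (hmeas.add hE.aestronglyMeasurable)
      ((ae_restrict_mem measurableSet_Ioi).mono hclose)
  have hF' : IntegrableOn F' (Ioi a) := by convert hsum.sub hE using 1; ext x; simp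
  calc |F a - ∫ x in Ioi a, E x| = |∫ x in Ioi a, (F' x + E x)| := by
        rw [integral_add hF' hE, integral_Ioi_of_hasDerivAt_of_tendsto hcont hderiv hF' hF,
          ← abs_neg]
        ring_nf
    _ ≤ ∫ x in Ioi a, |F' x + E x| := abs_integral_le_integral_abs
    _ ≤ ∫ x in Ioi a, ε * E x :=
        setIntegral_mono_on hsum.abs (hE.const_mul ε) measurableSet_Ioi hclose
    _ = ε * ∫ x in Ioi a, E x := integral_const_mul ε _

theorem tendsto_nhds_one_of_abs_one_sub_le_mul {α : Type*} {l : Filter α} {f ε : α → ℝ}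
    (hε : Tendsto ε l (𝓝 0)) (h : ∀ᶠ x in l, |1 - f x| ≤ ε x * f x) : Tendsto f l (𝓝 1) := by
  have hclose : ∀ᶠ x in l, ‖f x - 1‖ ≤ 2 * |ε x| := by
    filter_upwards [h, hε.abs.eventually_lt_const (by norm_num : |(0 : ℝ)| < 1 / 2)]
      with x hx hεx
    have hmul : ε x * f x ≤ |ε x| * |f x| := by rw [← abs_mul]; exact le_abs_self _
    have hf : 0 ≤ f x := by
      by_contra! hneg
      rw [abs_of_neg hneg] at hmul
      nlinarith [le_abs_self (1 - f x), abs_nonneg (ε x)]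
    rw [abs_of_nonneg hf] at hmul
    rw [norm_eq_abs, abs_sub_comm]
    have hf2 : f x ≤ 2 := by nlinarith [neg_abs_le (1 - f x)]
    nlinarith [abs_nonneg (ε x)]
  have h2 : Tendsto (fun x => 2 * |ε x|) l (𝓝 0) := by simpa using (hε.abs.const_mul 2)
  simpa using (squeeze_zero_norm' hclose h2).add_const 1

theorem abs_one_sub_mul_exp_mul_integral_Ioi_le {B b b' : ℝ → ℝ} {t ε : ℝ}
    (hB : ∀ x ∈ Ici t, HasDerivAt B (b x) x) (hb : ∀ x ∈ Ici t, HasDerivAt b (b' x) x)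
    (hb_pos : ∀ x ∈ Ici t, 0 < b x) (hE : IntegrableOn (fun x => exp (-B x)) (Ioi t))
    (hF : Tendsto (fun x => exp (-B x) / b x) atTop (𝓝 0))
    (hq : ∀ x ∈ Ioi t, |b' x| / b x ^ 2 ≤ ε) :
    |1 - b t * (exp (B t) * ∫ x in Ioi t, exp (-B x))|
      ≤ ε * (b t * (exp (B t) * ∫ x in Ioi t, exp (-B x))) := by
  have hderiv (x : ℝ) (hx : x ∈ Ici t) :=
    hasDerivAt_exp_neg_div (hB x hx) (hb x hx) (hb_pos x hx).ne'
  have htail := abs_sub_integral_Ioi_le_of_hasDerivAt (ε := ε)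
    (hderiv t self_mem_Ici).continuousAt.continuousWithinAt (fun x hx => hderiv x hx.out.le) hE
    (fun x hx => ?_) hF
  · have hbt := hb_pos t self_mem_Ici
    have hfactor : 1 - b t * (exp (B t) * ∫ x in Ioi t, exp (-B x))
        = b t * exp (B t) * (exp (-B t) / b t - ∫ x in Ioi t, exp (-B x)) := by
      rw [exp_neg]
      field_simp
    rw [hfactor, abs_mul, abs_of_pos (by positivity)]
    exact (mul_le_mul_of_nonneg_left htail (by positivity)).trans_eq (by ring)
  · have hsum : -exp (-B x) - exp (-B x) * (b' x / b x ^ 2) + exp (-B x)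
        = -(exp (-B x) * (b' x / b x ^ 2)) := by ring
    rw [hsum, abs_neg, abs_mul, abs_of_pos (exp_pos _), abs_div, abs_sq, mul_comm]
    exact mul_le_mul_of_nonneg_right (hq x hx) (exp_pos _).le

theorem aux_bg_tendsto_one_general (β : ℝ) (hβ2 : β < 1)
    (b b' : ℝ → ℝ) (hb_pos : ∀ t, 0 ≤ t → 0 < b t)
    (hb_deriv : ∀ t, 0 ≤ t → HasDerivWithinAt b (b' t) (Ici 0) t)
    (b₁ b₃ : ℝ) (hb₁ : 0 < b₁)
    (hlow : ∀ t, 0 ≤ t → b₁ * (1 + t) ^ (-β) ≤ b t)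
    (hb' : ∀ t, 0 ≤ t → |b' t| ≤ b₃ * (1 + t)⁻¹ * b t)
    (B : ℝ → ℝ) (hB : ∀ t, B t = ∫ s in (0:ℝ)..t, b s)
    (B₀ : ℝ) (hB₀ : B₀ = ∫ t in Ioi (0:ℝ), Real.exp (-B t))
    (g : ℝ → ℝ) (hg : ∀ t, g t = Real.exp (B t) * (B₀ - ∫ τ in (0:ℝ)..t, Real.exp (-B τ))) :
    Tendsto (fun t => b t * g t) atTop (nhds 1) := by
  have hb_cont : ContinuousOn b (Ici 0) := fun t ht => (hb_deriv t ht).continuousWithinAt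
  have hB_eq : B = fun t => ∫ s in (0:ℝ)..t, b s := funext hB
  have hB_low (t : ℝ) (ht : 0 ≤ t) : b₁ / (1 - β) * (1 + t) ^ (1 - β) - b₁ / (1 - β) ≤ B t :=
    hB t ▸ le_integral_of_mul_one_add_rpow_le hβ2 ht
      (hb_cont.mono (by rw [uIcc_of_le ht]; exact Icc_subset_Ici_self)).intervalIntegrable
      fun s hs => hlow s hs.1
  have hdecay := tendsto_one_add_rpow_mul_exp_neg_of_le (div_pos hb₁ (sub_pos.2 hβ2))
    (sub_pos.2 hβ2) (eventually_atTop.2 ⟨0, hB_low⟩)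
  have hE : IntegrableOn (fun x => exp (-B x)) (Ioi 0) :=
    integrableOn_Ioi_of_tendsto_one_add_rpow_mul one_lt_two
      (continuous_exp.comp_continuousOn (hB_eq ▸ continuousOn_primitive_Ici hb_cont).neg) (hdecay 2)
  have hF := tendsto_div_of_mul_one_add_rpow_le hb₁
    (Eventually.of_forall fun x => (exp_pos (-B x)).le) (eventually_atTop.2 ⟨0, hlow⟩) (hdecay β)
  have hε : Tendsto (fun t => b₃ / b₁ * (1 + t) ^ (β - 1)) atTop (𝓝 0) := by
    simpa [Function.comp_def] using ((tendsto_rpow_neg_atTop (sub_pos.2 hβ2)).comp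
      (tendsto_atTop_add_const_left atTop 1 tendsto_id)).const_mul (b₃ / b₁)
  refine tendsto_nhds_one_of_abs_one_sub_le_mul hε ?_
  filter_upwards [eventually_gt_atTop 0] with t ht
  have hg_tail : g t = exp (B t) * ∫ x in Ioi t, exp (-B x) := by
    rw [hg, hB₀, ← intervalIntegral.integral_interval_add_Ioi hE
      (hE.mono_set (Ioi_subset_Ioi ht.le))]
    ring
  have hpos (x : ℝ) (hx : x ∈ Ici t) : 0 < x := ht.trans_le hx
  rw [hg_tail]
  exact abs_one_sub_mul_exp_mul_integral_Ioi_le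
    (fun x hx => hB_eq ▸ hasDerivAt_primitive_of_continuousOn_Ici hb_cont (hpos x hx))
    (fun x hx => (hb_deriv x (hpos x hx).le).hasDerivAt (Ici_mem_nhds (hpos x hx)))
    (fun x hx => hb_pos x (hpos x hx).le) (hE.mono_set (Ioi_subset_Ioi ht.le)) hF
    fun x hx => abs_div_sq_le_of_le_mul_rpow ht.le hx.out.le hβ2.le hb₁
      (hlow x (hpos x hx.out.le).le) (hb' x (hpos x hx.out.le).le)

/-- Let `−1 ≤ β < 1` and let `b` be a positive `C¹` function with
`b₁(1+t)^{−β} ≤ b(t) ≤ b₂(1+t)^{−β}` and `|b'(t)| ≤ b₃(1+t)^{−1}b(t)`.  With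
`B(t) = ∫₀^t b`, `B₀ = ∫₀^∞ e^{−B}` and `g(t) = e^{B(t)}(B₀ − ∫₀^t e^{−B})`, one has
`lim_{t→∞} b(t)g(t) = 1`. -/
theorem aux_bg_tendsto_one (β : ℝ) (hβ1 : -1 ≤ β) (hβ2 : β < 1)
    (b b' : ℝ → ℝ) (hb_pos : ∀ t, 0 ≤ t → 0 < b t)
    (hb_deriv : ∀ t, 0 ≤ t → HasDerivWithinAt b (b' t) (Ici 0) t)
    (hb'_cont : ContinuousOn b' (Ici 0))
    (b₁ b₂ b₃ : ℝ) (hb₁ : 0 < b₁) (hb₂ : 0 < b₂) (hb₃ : 0 < b₃)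
    (hlow : ∀ t, 0 ≤ t → b₁ * (1 + t) ^ (-β) ≤ b t)
    (hupp : ∀ t, 0 ≤ t → b t ≤ b₂ * (1 + t) ^ (-β))
    (hb' : ∀ t, 0 ≤ t → |b' t| ≤ b₃ * (1 + t)⁻¹ * b t)
    (B : ℝ → ℝ) (hB : ∀ t, B t = ∫ s in (0:ℝ)..t, b s)
    (B₀ : ℝ) (hB₀ : B₀ = ∫ t in Ioi (0:ℝ), Real.exp (-B t))
    (g : ℝ → ℝ) (hg : ∀ t, g t = Real.exp (B t) * (B₀ - ∫ τ in (0:ℝ)..t, Real.exp (-B τ))) :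
    Tendsto (fun t => b t * g t) atTop (nhds 1) :=
  aux_bg_tendsto_one_general β hβ2 b b' hb_pos hb_deriv b₁ b₃ hb₁ hlow hb' B hB B₀ hB₀ g hg
end

section
/- Let E be a real Banach space, I ⊆ ℝ an interval, b : I → ℝ, g : I → ℝ twice differentiable with −g'(t) + b(t)g(t) = 1 for all t ∈ I, and u : I → E twice differentiable. Then for every t ∈ I, (g·u)''(t) − (g'·u)'(t) + u'(t) = g(t)·(u''(t) + b(t)u'(t)). In particular, if u solves u'' + A u + b(t)u' = h(t) for a linear map A and a function h, then (g·u)'' + A(g·u) − (g'·u)' + u' = g(t)h(t). -/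
/-!
Differentiating `g·u` twice and `g'·u` once, the terms in `g''` cancel and what remains is
`g' u' + g u'' + u'`; the relation `1 + g' = b g` turns `g' u' + u'` into `g b u'`.
-/

open Set

section ProductRule

variable {𝕜 : Type*} [NontriviallyNormedField 𝕜] {E : Type*} [NormedAddCommGroup E]
  [NormedSpace 𝕜 E] {g g' : 𝕜 → 𝕜} {u u' : 𝕜 → E} {c c' : 𝕜} {v v' : E} {s : Set 𝕜} {t : 𝕜}

theorem HasDerivWithinAt.smul_deriv_add (hg : HasDerivWithinAt g c s t)
    (hu : HasDerivWithinAt u v s t) : HasDerivWithinAt (fun r => g r • u r) (c • u t + g t • v) s t :=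
  (hg.smul hu).congr_deriv (add_comm _ _)

theorem HasDerivWithinAt.smul_second_deriv (hg : HasDerivWithinAt g (g' t) s t)
    (hg' : HasDerivWithinAt g' c' s t) (hu : HasDerivWithinAt u (u' t) s t)
    (hu' : HasDerivWithinAt u' v' s t) :
    HasDerivWithinAt (fun r => g' r • u r + g r • u' r)
      (c' • u t + (2 * g' t) • u' t + g t • v') s t :=
  ((hg'.smul_deriv_add hu).add (hg.smul_deriv_add hu')).congr_deriv (by module)

end ProductRule

theorem divergence_form_identity {R M : Type*} [CommRing R] [AddCommGroup M] [Module R M]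
    {b g g' g'' : R} {u u' u'' : M} (hbg : -g' + b * g = 1) :
    (g'' • u + (2 * g') • u' + g • u'') - (g'' • u + g' • u') + u' = g • (u'' + b • u') := by
  linear_combination (norm := module) (-hbg) • u'

theorem divergence_form_rewriting_general
    (E : Type*) [NormedAddCommGroup E] [NormedSpace ℝ E]
    (I : Set ℝ)
    (b g' g'' : ℝ → ℝ) (g : ℝ → ℝ) (u u' u'' : ℝ → E)
    (hg1 : ∀ t ∈ I, HasDerivWithinAt g (g' t) I t)
    (hg2 : ∀ t ∈ I, HasDerivWithinAt g' (g'' t) I t)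
    (hu1 : ∀ t ∈ I, HasDerivWithinAt u (u' t) I t)
    (hu2 : ∀ t ∈ I, HasDerivWithinAt u' (u'' t) I t)
    (hbg : ∀ t ∈ I, -g' t + b t * g t = 1) :
    (∀ t ∈ I,
      -- first derivative of `g·u`
      HasDerivWithinAt (fun s => g s • u s) (g' t • u t + g t • u' t) I t ∧
      -- second derivative of `g·u`, i.e. derivative of `g'·u + g·u'`
      HasDerivWithinAt (fun s => g' s • u s + g s • u' s)
        (g'' t • u t + (2 * g' t) • u' t + g t • u'' t) I t ∧
      -- first derivative of `g'·u`
      HasDerivWithinAt (fun s => g' s • u s) (g'' t • u t + g' t • u' t) I t ∧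
      -- the identity `(g·u)''(t) − (g'·u)'(t) + u'(t) = g(t)(u''(t) + b(t)u'(t))`
      (g'' t • u t + (2 * g' t) • u' t + g t • u'' t) - (g'' t • u t + g' t • u' t) + u' t
        = g t • (u'' t + b t • u' t)) ∧
    -- in particular
    (∀ (A : E →ₗ[ℝ] E) (h : ℝ → E),
      (∀ t ∈ I, u'' t + A (u t) + b t • u' t = h t) →
      ∀ t ∈ I,
        (g'' t • u t + (2 * g' t) • u' t + g t • u'' t) + A (g t • u t)
            - (g'' t • u t + g' t • u' t) + u' t
          = g t • h t) := by
  refine ⟨fun t ht => ⟨(hg1 t ht).smul_deriv_add (hu1 t ht),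
    (hg1 t ht).smul_second_deriv (hg2 t ht) (hu1 t ht) (hu2 t ht),
    (hg2 t ht).smul_deriv_add (hu1 t ht), divergence_form_identity (hbg t ht)⟩, ?_⟩
  intro A h hA t ht
  rw [map_smul, ← hA t ht]
  linear_combination (norm := module)
    divergence_form_identity (g'' := g'' t) (u := u t) (u' := u' t) (u'' := u'' t) (hbg t ht)

/-- Divergence-form rewriting: if `−g' + b·g = 1` on an interval `I`, `g` is
twice differentiable and `u : I → E` is twice differentiable, then
`(g·u)'' − (g'·u)' + u' = g·(u'' + b·u')` on `I`; here `(g·u)' = g'·u + g·u'` and the second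
derivatives are computed accordingly.  In particular, if `u'' + A u + b u' = h` for a linear
map `A`, then `(g·u)'' + A(g·u) − (g'·u)' + u' = g·h`. -/
theorem divergence_form_rewriting
    (E : Type*) [NormedAddCommGroup E] [NormedSpace ℝ E]
    (I : Set ℝ) (hI : I.OrdConnected)
    (b g' g'' : ℝ → ℝ) (g : ℝ → ℝ) (u u' u'' : ℝ → E)
    (hg1 : ∀ t ∈ I, HasDerivWithinAt g (g' t) I t)
    (hg2 : ∀ t ∈ I, HasDerivWithinAt g' (g'' t) I t)
    (hu1 : ∀ t ∈ I, HasDerivWithinAt u (u' t) I t)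
    (hu2 : ∀ t ∈ I, HasDerivWithinAt u' (u'' t) I t)
    (hbg : ∀ t ∈ I, -g' t + b t * g t = 1) :
    (∀ t ∈ I,
      -- first derivative of `g·u`
      HasDerivWithinAt (fun s => g s • u s) (g' t • u t + g t • u' t) I t ∧
      -- second derivative of `g·u`, i.e. derivative of `g'·u + g·u'`
      HasDerivWithinAt (fun s => g' s • u s + g s • u' s)
        (g'' t • u t + (2 * g' t) • u' t + g t • u'' t) I t ∧
      -- first derivative of `g'·u`
      HasDerivWithinAt (fun s => g' s • u s) (g'' t • u t + g' t • u' t) I t ∧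
      -- the identity `(g·u)''(t) − (g'·u)'(t) + u'(t) = g(t)(u''(t) + b(t)u'(t))`
      (g'' t • u t + (2 * g' t) • u' t + g t • u'' t) - (g'' t • u t + g' t • u' t) + u' t
        = g t • (u'' t + b t • u' t)) ∧
    -- in particular
    (∀ (A : E →ₗ[ℝ] E) (h : ℝ → E),
      (∀ t ∈ I, u'' t + A (u t) + b t • u' t = h t) →
      ∀ t ∈ I,
        (g'' t • u t + (2 * g' t) • u' t + g t • u'' t) + A (g t • u t)
            - (g'' t • u t + g' t • u' t) + u' t
          = g t • h t) :=
  divergence_form_rewriting_general E I b g' g'' g u u' u'' hg1 hg2 hu1 hu2 hbg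
end
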